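/- Let I be a countable directed partially ordered set and let (C(i))_{i∈I} be an inverse system of chain complexes of O-modules, with transition chain maps C(j) → C(i) for i ≤ j. Suppose that: (1) for every i ∈ I and every integer m, the homology group H_m(C(i)) is an Artinian O-module; and (2) either every term of every complex C(i) is an Artinian O-module, or for every pair i ≤ j in I the transition map C(j) → C(i) is surjective in each degree. Then for every integer m the natural map H_m(lim_I C(i)) → lim_I H_m(C(i)) is an isomorphism, where lim_I C(i) denotes the termwise inverse limit of the system of complexes. -/

import Mathlib

/-!
STATEMENT 12: Let `p` be a prime, `E` a finite extension of `ℚ_p`, and `O` the ring of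
integers of `E`.  Let `I` be a countable directed partially ordered set and let
`(C(i))_{i∈I}` be an inverse system of chain complexes of `O`-modules, with transition
chain maps `C(j) → C(i)` for `i ≤ j`.  Suppose that:
(1) for every `i ∈ I` and every integer `m`, the homology group `H_m(C(i))` is an Artinian
    `O`-module; and
(2) either every term of every complex `C(i)` is an Artinian `O`-module, or for every pair
    `i ≤ j` in `I` the transition map `C(j) → C(i)` is surjective in each degree.
Then for every integer `m` the natural map `H_m(lim_I C(i)) → lim_I H_m(C(i))` is an
isomorphism, where `lim_I C(i)` is the termwise inverse limit of the system of complexes.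
(We express the isomorphism by saying that the map to the product `∏_i H_m(C(i))` induced
by the projections is injective with image exactly the compatible families, i.e. exactly
the inverse limit of the homology groups.)
-/

open CategoryTheory

section LimComplex

variable {O : Type} [Ring O] {I : Type} [Preorder I]
variable (C : I → ChainComplex (ModuleCat O) ℤ)
variable (T : ∀ ⦃i j : I⦄, i ≤ j → (C j ⟶ C i))

/-- The submodule of compatible families in the product, in degree `n`:
the degree-`n` term of the inverse limit complex. -/
def limX (n : ℤ) : Submodule O (∀ i, ↥((C i).X n)) where
  carrier := {f | ∀ (i j : I) (h : i ≤ j), (T h).f n (f j) = f i}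
  add_mem' := fun {f g} hf hg i j h => by
    simp only [Pi.add_apply, map_add, hf i j h, hg i j h]
  zero_mem' := fun i j h => by simp only [Pi.zero_apply, map_zero]
  smul_mem' := fun r f hf i j h => by
    simp only [Pi.smul_apply, map_smul, hf i j h]

/-- The differential of the product complex, componentwise. -/
def limBigD (n n' : ℤ) : (∀ i, ↥((C i).X n)) →ₗ[O] (∀ i, ↥((C i).X n')) :=
  LinearMap.pi fun i => (((C i).d n n').hom : ↥((C i).X n) →ₗ[O] ↥((C i).X n')).comp
    (LinearMap.proj i)

/-- The termwise inverse limit of an inverse system of chain complexes of `O`-modules. -/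
def limComplex : ChainComplex (ModuleCat O) ℤ where
  X n := ModuleCat.of O (limX C T n)
  d n n' := ModuleCat.ofHom <| LinearMap.codRestrict (limX C T n')
    ((limBigD C n n').comp (limX C T n).subtype)
    (by
      rintro ⟨f, hf⟩
      intro i j h
      have h1 := LinearMap.congr_fun (congrArg ModuleCat.Hom.hom ((T h).comm n n')) (f j)
      have h2 : (T h).f n (f j) = f i := hf i j h
      calc (T h).f n' ((C j).d n n' (f j))
          = (C i).d n n' ((T h).f n (f j)) := h1.symm
        _ = (C i).d n n' (f i) := by rw [h2])
  shape n n' h := by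
    apply ModuleCat.hom_ext
    apply LinearMap.ext; intro f
    apply Subtype.ext; funext i
    show (C i).d n n' (f.1 i) = _
    rw [(C i).shape n n' h]
    rfl
  d_comp_d' n n' n'' _ _ := by
    apply ModuleCat.hom_ext
    apply LinearMap.ext; intro f
    apply Subtype.ext; funext i
    exact LinearMap.congr_fun (congrArg ModuleCat.Hom.hom ((C i).d_comp_d n n' n'')) (f.1 i)

/-- The projection from the inverse limit complex to the `i`-th complex. -/
def limProj (i : I) : limComplex C T ⟶ C i where
  f n := ModuleCat.ofHom
    { toFun := fun f => f.1 i
      map_add' := fun _ _ => rfl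
      map_smul' := fun _ _ => rfl }
  comm' := fun n n' _ => rfl

end LimComplex

/-!
Injectivity and surjectivity both reduce to choosing a compatible family in an inverse system of
cosets `x₀ i + N i`: the primitives of a cycle of the limit whose components are boundaries form
cosets of the cycles, and the representing cycles of a compatible family of homology classes form
cosets of the boundaries. Such a family exists as soon as the images of the `N l` in `X i`
stabilize (Mittag-Leffler): the stable images of the cosets then map onto each other, and one
picks points along a cofinal sequence of the countable directed index set.

The images stabilize because of the Artinian hypotheses. If the terms are Artinian, they form a
decreasing family of submodules of an Artinian module. If the transition maps are surjective, the
boundaries of `C l` map onto those of `C i`, and the image of the cycles of `C l` is the preimage,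
among the cycles of `C i`, of the image of `H(C l) → H(C i)`: a decreasing family of submodules
of the Artinian module `H(C i)`.
-/

universe u v

namespace CategoryTheory.ShortComplex

variable {R : Type u} [Ring R] (S : ShortComplex (ModuleCat.{v} R))
  {S₁ S₂ : ShortComplex (ModuleCat.{v} R)}

noncomputable def moduleCatHomologyMk : LinearMap.ker S.g.hom →ₗ[R] S.homology :=
  S.homologyπ.hom ∘ₗ S.moduleCatCyclesIso.inv.hom

lemma moduleCatHomologyMk_apply (z : LinearMap.ker S.g.hom) :
    S.moduleCatHomologyMk z = S.homologyπ (S.moduleCatCyclesIso.inv z) := rfl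

lemma moduleCatHomologyMk_surjective : Function.Surjective S.moduleCatHomologyMk :=
  ((ModuleCat.epi_iff_surjective S.homologyπ).1 inferInstance).comp
    (ConcreteCategory.bijective_of_isIso S.moduleCatCyclesIso.inv).2

lemma moduleCatHomologyMk_eq_zero_iff (z : LinearMap.ker S.g.hom) :
    S.moduleCatHomologyMk z = 0 ↔ (z : S.X₂) ∈ LinearMap.range S.f.hom := by
  have hinj := (ConcreteCategory.bijective_of_isIso S.moduleCatHomologyIso.inv).1
  have e : S.moduleCatHomologyMk z =
      S.moduleCatHomologyIso.inv.hom (S.moduleCatLeftHomologyData.π.hom z) :=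
    S.moduleCatCyclesIso_inv_π_apply z
  rw [e, ← map_zero S.moduleCatHomologyIso.inv.hom]
  erw [hinj.eq_iff, Submodule.Quotient.mk_eq_zero]
  exact ⟨fun ⟨x, hx⟩ => ⟨x, congrArg Subtype.val hx⟩, fun ⟨x, hx⟩ => ⟨x, Subtype.ext hx⟩⟩

lemma τ₂_mem_ker_g (φ : S₁ ⟶ S₂) {x : S₁.X₂} (hx : x ∈ LinearMap.ker S₁.g.hom) :
    φ.τ₂ x ∈ LinearMap.ker S₂.g.hom := by
  rw [LinearMap.mem_ker] at hx ⊢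
  rw [← ConcreteCategory.comp_apply, φ.comm₂₃, ConcreteCategory.comp_apply, hx, map_zero]

lemma homologyMap_moduleCatHomologyMk (φ : S₁ ⟶ S₂) (z : LinearMap.ker S₁.g.hom) :
    homologyMap φ (S₁.moduleCatHomologyMk z) =
      S₂.moduleCatHomologyMk ⟨φ.τ₂ z, τ₂_mem_ker_g φ z.2⟩ := by
  have hi := (ModuleCat.mono_iff_injective S₂.iCycles).1 inferInstance
  have e : cyclesMap φ (S₁.moduleCatCyclesIso.inv z) =
      S₂.moduleCatCyclesIso.inv ⟨φ.τ₂ z, τ₂_mem_ker_g φ z.2⟩ := by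
    apply hi
    rw [← ConcreteCategory.comp_apply, cyclesMap_i, ConcreteCategory.comp_apply]
    erw [moduleCatCyclesIso_inv_iCycles_apply, moduleCatCyclesIso_inv_iCycles_apply]
    rfl
  rw [moduleCatHomologyMk_apply, moduleCatHomologyMk_apply, ← e, ← ConcreteCategory.comp_apply,
    homologyπ_naturality, ConcreteCategory.comp_apply]

end CategoryTheory.ShortComplex

section CountableInverseLimits

open Set Filter

variable {I : Type*} [Preorder I] {X : I → Type*}

theorem exists_compatible_of_image_eq [IsDirected I (· ≤ ·)] [Countable I]
    (φ : ∀ ⦃i j : I⦄, i ≤ j → X j → X i)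
    (hφ : ∀ ⦃i j k : I⦄ (hij : i ≤ j) (hjk : j ≤ k) (x : X k),
      φ hij (φ hjk x) = φ (hij.trans hjk) x)
    (E : ∀ i, Set (X i)) (hE : ∀ i, (E i).Nonempty)
    (hsurj : ∀ ⦃i j : I⦄ (h : i ≤ j), φ h '' E j = E i) :
    ∃ x : ∀ i, X i, (∀ i, x i ∈ E i) ∧ ∀ (i j : I) (h : i ≤ j), φ h (x j) = x i := by
  rcases isEmpty_or_nonempty I with hI | hI
  · exact ⟨isEmptyElim, isEmptyElim, isEmptyElim⟩
  obtain ⟨u, hu, hu_top⟩ := exists_seq_monotone_tendsto_atTop_atTop I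
  choose N hN using fun i => (tendsto_atTop_atTop.1 hu_top i)
  have hlift : ∀ n (a : E (u n)), ∃ b : E (u (n + 1)), φ (hu n.le_succ) b = a := fun n a => by
    obtain ⟨b, hb, hba⟩ := (hsurj (hu n.le_succ)).ge a.2
    exact ⟨⟨b, hb⟩, hba⟩
  choose lift hlift using hlift
  let y : ∀ n, E (u n) := fun n =>
    Nat.rec (motive := fun n => E (u n)) ⟨_, (hE (u 0)).some_mem⟩ lift n
  have hy_mono : ∀ (i : I) (n n' : ℕ) (hn : i ≤ u n) (hn' : i ≤ u n'), n ≤ n' →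
      φ hn' (y n') = φ hn (y n) := by
    intro i n n' hn hn' hnn'
    induction n', hnn' using Nat.le_induction with
    | base => rfl
    | succ n' hnn' ih =>
      rw [← ih (hn.trans (hu hnn')), ← hlift n' (y n'), hφ]
  have hy : ∀ (i : I) (n n' : ℕ) (hn : i ≤ u n) (hn' : i ≤ u n'), φ hn' (y n') = φ hn (y n) :=
    fun i n n' hn hn' => (le_total n n').elim (hy_mono i n n' hn hn')
      fun h => (hy_mono i n' n hn' hn h).symm
  refine ⟨fun i => φ (hN i _ le_rfl) (y (N i)), fun i => (hsurj _).le ⟨_, (y _).2, rfl⟩,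
    fun i j h => ?_⟩
  rw [hφ]
  exact hy i _ _ _ _

theorem exists_compatible_of_mittagLeffler [IsDirected I (· ≤ ·)] [Countable I]
    (φ : ∀ ⦃i j : I⦄, i ≤ j → X j → X i)
    (hφ : ∀ ⦃i j k : I⦄ (hij : i ≤ j) (hjk : j ≤ k) (x : X k),
      φ hij (φ hjk x) = φ (hij.trans hjk) x)
    (S : ∀ i, Set (X i)) (hS : ∀ i, (S i).Nonempty)
    (hmaps : ∀ ⦃i j : I⦄ (h : i ≤ j), MapsTo (φ h) (S j) (S i))
    (hML : ∀ i, ∃ k, ∃ hik : i ≤ k, ∀ l (hkl : k ≤ l), φ hik '' S k ⊆ φ (hik.trans hkl) '' S l) :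
    ∃ x : ∀ i, X i, (∀ i, x i ∈ S i) ∧ ∀ (i j : I) (h : i ≤ j), φ h (x j) = x i := by
  choose k hik hk using hML
  have image_trans_subset : ∀ ⦃i j l : I⦄ (hij : i ≤ j) (hjl : j ≤ l),
      φ (hij.trans hjl) '' S l ⊆ φ hij '' S j := by
    rintro i j l hij hjl _ ⟨x, hx, rfl⟩
    exact ⟨φ hjl x, hmaps hjl hx, hφ _ _ _⟩
  have hstable : ∀ i l (hl : k i ≤ l), φ (hik i) '' S (k i) = φ ((hik i).trans hl) '' S l :=
    fun i l hl => (hk i l hl).antisymm (image_trans_subset _ hl)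
  obtain ⟨x, hxE, hx⟩ := exists_compatible_of_image_eq φ hφ (fun i => φ (hik i) '' S (k i))
    (fun i => (hS (k i)).image _) (fun i j h => by
      obtain ⟨l, hil, hjl⟩ := directed_of (· ≤ ·) (k i) (k j)
      rw [hstable i l hil, hstable j l hjl, image_image]
      simp only [hφ])
  exact ⟨x, fun i => image_subset_iff.2 (fun y hy => hmaps _ hy) (hxE i), hx⟩

end CountableInverseLimits

section Modules

open Set

variable {I : Type*} [Preorder I] {R : Type*} [Ring R] {X : I → Type*}
  [∀ i, AddCommGroup (X i)] [∀ i, Module R (X i)]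

/-- Only the inclusion of the stable image in the later images is required: the reverse inclusion
holds whenever `φ` maps `N` into `N`. -/
def IsMittagLeffler (φ : ∀ ⦃i j : I⦄, i ≤ j → X j →ₗ[R] X i) (N : ∀ i, Submodule R (X i)) :
    Prop :=
  ∀ i, ∃ k, ∃ hik : i ≤ k, ∀ l (hkl : k ≤ l), (N k).map (φ hik) ≤ (N l).map (φ (hik.trans hkl))

theorem exists_compatible_sub_mem_of_isMittagLeffler [IsDirected I (· ≤ ·)] [Countable I]
    (φ : ∀ ⦃i j : I⦄, i ≤ j → X j →ₗ[R] X i)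
    (hφ : ∀ ⦃i j k : I⦄ (hij : i ≤ j) (hjk : j ≤ k) (x : X k),
      φ hij (φ hjk x) = φ (hij.trans hjk) x)
    (N : ∀ i, Submodule R (X i)) (hN : ∀ ⦃i j : I⦄ (h : i ≤ j), (N j).map (φ h) ≤ N i)
    (x₀ : ∀ i, X i) (hx₀ : ∀ ⦃i j : I⦄ (h : i ≤ j), φ h (x₀ j) - x₀ i ∈ N i)
    (hML : IsMittagLeffler φ N) :
    ∃ x : ∀ i, X i, (∀ i, x i - x₀ i ∈ N i) ∧ ∀ (i j : I) (h : i ≤ j), φ h (x j) = x i := by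
  refine exists_compatible_of_mittagLeffler (fun i j h => φ h) hφ (fun i => {v | v - x₀ i ∈ N i})
    (fun i => ⟨x₀ i, by simp⟩) (fun i j h v hv => ?_) (fun i => ?_)
  · have e : φ h v - x₀ i = φ h (v - x₀ j) + (φ h (x₀ j) - x₀ i) := by rw [map_sub]; abel
    change φ h v - x₀ i ∈ N i
    rw [e]
    exact add_mem (hN h ⟨_, hv, rfl⟩) (hx₀ h)
  obtain ⟨k, hik, hk⟩ := hML i
  refine ⟨k, hik, fun l hkl => ?_⟩
  rintro _ ⟨s, hs, rfl⟩
  -- `s` and `t` lie in the same coset at `k`, and `t` comes from level `l`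
  set t := φ hkl (x₀ l)
  have hst : s - t ∈ N k := by
    simpa using sub_mem hs (hx₀ hkl)
  obtain ⟨n, hn, hnst⟩ := hk l hkl ⟨_, hst, rfl⟩
  refine ⟨x₀ l + n, by simpa using hn, ?_⟩
  simp only [map_add, hnst, map_sub, t, hφ]
  abel

theorem exists_le_of_antitone_of_isArtinian {ι : Type*} [Preorder ι] [Nonempty ι] {Y : Type*}
    [AddCommGroup Y] [Module R Y] [IsArtinian R Y] {N : ι → Submodule R Y} (hN : Antitone N) :
    ∃ k, ∀ l, k ≤ l → N k ≤ N l := by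
  obtain ⟨_, ⟨k, rfl⟩, hk⟩ := IsArtinian.set_has_minimal (range N) (range_nonempty N)
  exact ⟨k, fun l hkl => not_lt_iff_le_imp_ge.1 (hk _ ⟨l, rfl⟩) (hN hkl)⟩

theorem isMittagLeffler_of_isArtinian [∀ i, IsArtinian R (X i)]
    (φ : ∀ ⦃i j : I⦄, i ≤ j → X j →ₗ[R] X i)
    (hφ : ∀ ⦃i j k : I⦄ (hij : i ≤ j) (hjk : j ≤ k) (x : X k),
      φ hij (φ hjk x) = φ (hij.trans hjk) x)
    (N : ∀ i, Submodule R (X i)) (hN : ∀ ⦃i j : I⦄ (h : i ≤ j), (N j).map (φ h) ≤ N i) :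
    IsMittagLeffler φ N := by
  intro i
  have hanti : Antitone fun l : Ici i => (N l).map (φ l.2) := by
    rintro ⟨k, hik⟩ ⟨l, hil⟩ (hkl : k ≤ l)
    have e : φ hil = (φ hik).comp (φ hkl) := LinearMap.ext fun x => (hφ hik hkl x).symm
    simp only [e, Submodule.map_comp]
    exact Submodule.map_mono (hN hkl)
  obtain ⟨⟨k, hik⟩, hk⟩ := exists_le_of_antitone_of_isArtinian hanti
  exact ⟨k, hik, fun l hkl => hk ⟨l, hik.trans hkl⟩ hkl⟩

end Modules

namespace HomologicalComplex

variable {R : Type u} [Ring R] {ι : Type*} {c : ComplexShape ι}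
  {K L : HomologicalComplex (ModuleCat.{v} R) c}

lemma Hom.comm_apply (φ : K ⟶ L) (n n' : ι) (x : K.X n) :
    L.d n n' (φ.f n x) = φ.f n' (K.d n n' x) := by
  rw [← ConcreteCategory.comp_apply, φ.comm, ConcreteCategory.comp_apply]

lemma d_comp_d_apply (K : HomologicalComplex (ModuleCat.{v} R) c) (n n' n'' : ι) (x : K.X n) :
    K.d n' n'' (K.d n n' x) = 0 := by
  rw [← ConcreteCategory.comp_apply, K.d_comp_d]
  rfl

lemma map_ker_d_le (φ : K ⟶ L) (n n' : ι) :
    (LinearMap.ker (K.d n n').hom).map (φ.f n).hom ≤ LinearMap.ker (L.d n n').hom := by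
  rintro _ ⟨x, hx : K.d n n' x = 0, rfl⟩
  exact (Hom.comm_apply φ n n' x).trans (by rw [hx, map_zero])

lemma map_range_d_le (φ : K ⟶ L) (n n' : ι) :
    (LinearMap.range (K.d n n').hom).map (φ.f n').hom ≤ LinearMap.range (L.d n n').hom := by
  rintro _ ⟨_, ⟨x, rfl⟩, rfl⟩
  exact ⟨φ.f n x, Hom.comm_apply φ n n' x⟩

noncomputable abbrev homologyMk (K : HomologicalComplex (ModuleCat.{v} R) c) (n : ι) :
    LinearMap.ker (K.d n (c.next n)).hom →ₗ[R] K.homology n :=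
  (K.sc n).moduleCatHomologyMk

lemma homologyMk_surjective (n : ι) : Function.Surjective (K.homologyMk n) :=
  (K.sc n).moduleCatHomologyMk_surjective

lemma homologyMk_eq_zero_iff {n₀ n : ι} (h : c.Rel n₀ n)
    (z : LinearMap.ker (K.d n (c.next n)).hom) :
    K.homologyMk n z = 0 ↔ ∃ x, K.d n₀ n x = z := by
  obtain rfl := c.prev_eq' h
  exact (K.sc n).moduleCatHomologyMk_eq_zero_iff z

lemma homologyMap_homologyMk (φ : K ⟶ L) {n : ι} (z : LinearMap.ker (K.d n (c.next n)).hom) :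
    homologyMap φ n (K.homologyMk n z) =
      L.homologyMk n ⟨φ.f n z, map_ker_d_le φ _ _ ⟨z, z.2, rfl⟩⟩ :=
  ShortComplex.homologyMap_moduleCatHomologyMk ((shortComplexFunctor _ c n).map φ) z

end HomologicalComplex

section InverseSystemOfComplexes

open HomologicalComplex

variable {R : Type u} [Ring R] {ι : Type*} {c : ComplexShape ι} {I : Type*} [Preorder I]
  {C : I → HomologicalComplex (ModuleCat.{v} R) c} (T : ∀ ⦃i j : I⦄, i ≤ j → (C j ⟶ C i))

lemma f_map_map_of_comp (Tcomp : ∀ (i j l : I) (hij : i ≤ j) (hjl : j ≤ l),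
      T (hij.trans hjl) = T hjl ≫ T hij) (n : ι) ⦃i j l : I⦄ (hij : i ≤ j) (hjl : j ≤ l)
    (x : (C l).X n) : (T hij).f n ((T hjl).f n x) = (T (hij.trans hjl)).f n x := by
  rw [Tcomp i j l hij hjl]
  rfl

theorem isMittagLeffler_range_d_of_surjective {n n' : ι}
    (hsurj : ∀ ⦃i j : I⦄ (h : i ≤ j), Function.Surjective ((T h).f n)) :
    IsMittagLeffler (fun _ _ h => ((T h).f n').hom)
      (fun i => LinearMap.range ((C i).d n n').hom) := by
  refine fun i => ⟨i, le_rfl, fun l hil => (map_range_d_le _ n n').trans ?_⟩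
  rintro _ ⟨x, rfl⟩
  obtain ⟨x, rfl⟩ := hsurj hil x
  exact ⟨(C l).d n n' x, ⟨x, rfl⟩, (Hom.comm_apply _ n n' x).symm⟩

theorem isMittagLeffler_ker_d_of_surjective (Tcomp : ∀ (i j l : I) (hij : i ≤ j) (hjl : j ≤ l),
      T (hij.trans hjl) = T hjl ≫ T hij) {n₀ n n' : ι} (hn₀ : c.Rel n₀ n) (hn' : c.Rel n n')
    (hart : ∀ i, IsArtinian R ((C i).homology n))
    (hsurj : ∀ ⦃i j : I⦄ (h : i ≤ j), Function.Surjective ((T h).f n₀)) :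
    IsMittagLeffler (fun _ _ h => ((T h).f n).hom) (fun i => LinearMap.ker ((C i).d n n').hom) := by
  obtain rfl := c.next_eq' hn'
  intro i
  have := hart i
  have hanti : Antitone fun l : Set.Ici i => LinearMap.range (homologyMap (T l.2) n).hom := by
    rintro ⟨k, hik⟩ ⟨l, hil⟩ (hkl : k ≤ l)
    simp only [Tcomp i k l hik hkl, homologyMap_comp, ModuleCat.hom_comp]
    exact LinearMap.range_comp_le_range _ _
  obtain ⟨⟨k, hik⟩, hk⟩ := exists_le_of_antitone_of_isArtinian hanti
  refine ⟨k, hik, fun l hkl => ?_⟩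
  rintro _ ⟨z, hz, rfl⟩
  obtain ⟨h, hh⟩ := hk ⟨l, hik.trans hkl⟩ hkl ⟨(C k).homologyMk n ⟨z, hz⟩, rfl⟩
  obtain ⟨w, rfl⟩ := homologyMk_surjective n h
  simp only [homologyMap_homologyMk] at hh
  rw [← sub_eq_zero, ← map_sub] at hh
  obtain ⟨b, hb⟩ := (homologyMk_eq_zero_iff hn₀ _).1 hh
  obtain ⟨b, rfl⟩ := hsurj (hik.trans hkl) b
  refine ⟨(w : (C l).X n) - (C l).d n₀ n b, sub_mem w.2 (d_comp_d_apply _ _ _ _ b), ?_⟩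
  change (T _).f n ((w : (C l).X n) - (C l).d n₀ n b) = (T hik).f n z
  rw [map_sub, ← Hom.comm_apply, hb, Submodule.coe_sub, sub_sub_cancel]

end InverseSystemOfComplexes

section LimComplexHomology

open HomologicalComplex

variable {O : Type} [Ring O] {I : Type} [Preorder I] {C : I → ChainComplex (ModuleCat O) ℤ}
  {T : ∀ ⦃i j : I⦄, i ≤ j → (C j ⟶ C i)}

lemma limProj_comp {i j : I} (h : i ≤ j) : limProj C T j ≫ T h = limProj C T i := by
  ext n x
  exact x.2 i j h

lemma homologyMap_limProj_compatible (m : ℤ) {i j : I} (h : i ≤ j)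
    (x : (limComplex C T).homology m) :
    homologyMap (T h) m (homologyMap (limProj C T j) m x) = homologyMap (limProj C T i) m x := by
  rw [← ConcreteCategory.comp_apply, ← homologyMap_comp, limProj_comp]

theorem homologyMap_limProj_injective [IsDirected I (· ≤ ·)] [Countable I]
    (Tcomp : ∀ (i j l : I) (hij : i ≤ j) (hjl : j ≤ l), T (hij.trans hjl) = T hjl ≫ T hij)
    (m : ℤ) (hML : IsMittagLeffler (fun _ _ h => ((T h).f (m + 1)).hom)
      (fun i => LinearMap.ker ((C i).d (m + 1) m).hom)) :
    Function.Injective fun (x : (limComplex C T).homology m) i =>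
      homologyMap (limProj C T i) m x := by
  let Φ : (limComplex C T).homology m →ₗ[O] ∀ i, (C i).homology m :=
    LinearMap.pi fun i => (homologyMap (limProj C T i) m).hom
  refine (injective_iff_map_eq_zero Φ).2 fun x hx => ?_
  obtain ⟨z, rfl⟩ := homologyMk_surjective m x
  have hbd : ∀ i, ∃ w, (C i).d (m + 1) m w = z.1.1 i := fun i => by
    have hi : homologyMap (limProj C T i) m (homologyMk _ m z) = 0 := congrFun hx i
    rwa [homologyMap_homologyMk, homologyMk_eq_zero_iff rfl] at hi
  choose w hw using hbd
  have hw_compat : ∀ ⦃i j : I⦄ (h : i ≤ j), (T h).f (m + 1) (w j) - w i ∈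
      LinearMap.ker ((C i).d (m + 1) m).hom := fun i j h => by
    change (C i).d (m + 1) m _ = 0
    rw [map_sub, Hom.comm_apply, hw, hw, sub_eq_zero]
    exact z.1.2 i j h
  obtain ⟨w', hw'w, hw'⟩ := exists_compatible_sub_mem_of_isMittagLeffler _
    (f_map_map_of_comp T Tcomp (m + 1)) _ (fun i j h => map_ker_d_le (T h) _ _) w
    hw_compat hML
  refine (homologyMk_eq_zero_iff rfl z).2 ⟨⟨w', hw'⟩, Subtype.ext (funext fun i => ?_)⟩
  change (C i).d (m + 1) m (w' i) = _
  rw [← hw i, ← sub_eq_zero, ← map_sub]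
  exact hw'w i

theorem exists_homologyMap_limProj_eq [IsDirected I (· ≤ ·)] [Countable I]
    (Tcomp : ∀ (i j l : I) (hij : i ≤ j) (hjl : j ≤ l), T (hij.trans hjl) = T hjl ≫ T hij)
    (m : ℤ) (hML : IsMittagLeffler (fun _ _ h => ((T h).f m).hom)
      (fun i => LinearMap.range ((C i).d (m + 1) m).hom))
    (g : ∀ i, (C i).homology m) (hg : ∀ (i j : I) (h : i ≤ j), homologyMap (T h) m (g j) = g i) :
    ∃ x : (limComplex C T).homology m, ∀ i, homologyMap (limProj C T i) m x = g i := by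
  choose z hz using fun i => homologyMk_surjective m (g i)
  have hz_compat : ∀ ⦃i j : I⦄ (h : i ≤ j), (T h).f m (z j) - z i ∈
      LinearMap.range ((C i).d (m + 1) m).hom := fun i j h => by
    refine (homologyMk_eq_zero_iff rfl (⟨_, map_ker_d_le (T h) _ _ ⟨z j, (z j).2, rfl⟩⟩ - z i)).1 ?_
    rw [map_sub, ← homologyMap_homologyMk, hz, hz, hg, sub_self]
  obtain ⟨x, hxz, hx⟩ := exists_compatible_sub_mem_of_isMittagLeffler _
    (f_map_map_of_comp T Tcomp m) _ (fun i j h => map_range_d_le (T h) _ _) (fun i => z i)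
    hz_compat hML
  have hx_cycle : (⟨x, hx⟩ : limX C T m) ∈
      LinearMap.ker ((limComplex C T).d m ((ComplexShape.down ℤ).next m)).hom := by
    refine Subtype.ext (funext fun i => ?_)
    obtain ⟨b, hb⟩ := hxz i
    change (C i).d m _ (x i) = 0
    rw [← sub_add_cancel (x i) (z i), ← hb, map_add, d_comp_d_apply, zero_add]
    exact (z i).2
  refine ⟨homologyMk _ m ⟨⟨x, hx⟩, hx_cycle⟩, fun i => ?_⟩
  rw [homologyMap_homologyMk, ← hz i, ← sub_eq_zero, ← map_sub]
  exact (homologyMk_eq_zero_iff rfl _).2 (hxz i)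

end LimComplexHomology

theorem stmt_12_general
    (p : ℕ) [Fact p.Prime] (E : Type) [Field E] [Algebra ℤ_[p] E]
    (I : Type) [PartialOrder I] [IsDirected I (· ≤ ·)] [Countable I]
    (C : I → ChainComplex (ModuleCat ↥(integralClosure ℤ_[p] E)) ℤ)
    (T : ∀ ⦃i j : I⦄, i ≤ j → (C j ⟶ C i))
    (Tcomp : ∀ (i j l : I) (hij : i ≤ j) (hjl : j ≤ l),
      T (hij.trans hjl) = T hjl ≫ T hij)
    (hart : ∀ (i : I) (m : ℤ),
      IsArtinian ↥(integralClosure ℤ_[p] E) ↥((C i).homology m))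
    (h2 : (∀ (i : I) (n : ℤ), IsArtinian ↥(integralClosure ℤ_[p] E) ↥((C i).X n)) ∨
      (∀ (i j : I) (h : i ≤ j) (n : ℤ), Function.Surjective ((T h).f n))) :
    ∀ m : ℤ,
      Function.Injective
        (fun (h : ↥((limComplex C T).homology m)) (i : I) =>
          HomologicalComplex.homologyMap (limProj C T i) m h) ∧
      Set.range
        (fun (h : ↥((limComplex C T).homology m)) (i : I) =>
          HomologicalComplex.homologyMap (limProj C T i) m h)
        = {g : ∀ i : I, ↥((C i).homology m) |
            ∀ (i j : I) (hij : i ≤ j),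
              HomologicalComplex.homologyMap (T hij) m (g j) = g i} := by
  intro m
  have hφ := f_map_map_of_comp T Tcomp
  have hML_ker : IsMittagLeffler (fun _ _ h => ((T h).f (m + 1)).hom)
      (fun i => LinearMap.ker ((C i).d (m + 1) m).hom) := h2.elim
    (fun hX => have := fun i => hX i (m + 1)
      isMittagLeffler_of_isArtinian _ (hφ _) _ fun _ _ h =>
        HomologicalComplex.map_ker_d_le (T h) _ _)
    (fun hsurj => isMittagLeffler_ker_d_of_surjective T Tcomp (n₀ := m + 1 + 1) rfl rfl
      (fun i => hart i (m + 1)) fun i j h => hsurj i j h _)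
  have hML_range : IsMittagLeffler (fun _ _ h => ((T h).f m).hom)
      (fun i => LinearMap.range ((C i).d (m + 1) m).hom) := h2.elim
    (fun hX => have := fun i => hX i m
      isMittagLeffler_of_isArtinian _ (hφ _) _ fun _ _ h =>
        HomologicalComplex.map_range_d_le (T h) _ _)
    (fun hsurj => isMittagLeffler_range_d_of_surjective T fun i j h => hsurj i j h _)
  refine ⟨homologyMap_limProj_injective Tcomp m hML_ker, Set.Subset.antisymm ?_ ?_⟩
  · rintro _ ⟨x, rfl⟩ i j h
    exact homologyMap_limProj_compatible m h x
  · intro g hg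
    obtain ⟨x, hx⟩ := exists_homologyMap_limProj_eq Tcomp m hML_range g hg
    exact ⟨x, funext hx⟩

theorem stmt_12
    (p : ℕ) [Fact p.Prime] (E : Type) [Field E] [Algebra ℚ_[p] E]
    [FiniteDimensional ℚ_[p] E] [Algebra ℤ_[p] E] [IsScalarTower ℤ_[p] ℚ_[p] E]
    (I : Type) [PartialOrder I] [IsDirected I (· ≤ ·)] [Countable I]
    (C : I → ChainComplex (ModuleCat ↥(integralClosure ℤ_[p] E)) ℤ)
    (T : ∀ ⦃i j : I⦄, i ≤ j → (C j ⟶ C i))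
    (Trefl : ∀ i : I, T (le_refl i) = 𝟙 (C i))
    (Tcomp : ∀ (i j l : I) (hij : i ≤ j) (hjl : j ≤ l),
      T (hij.trans hjl) = T hjl ≫ T hij)
    (hart : ∀ (i : I) (m : ℤ),
      IsArtinian ↥(integralClosure ℤ_[p] E) ↥((C i).homology m))
    (h2 : (∀ (i : I) (n : ℤ), IsArtinian ↥(integralClosure ℤ_[p] E) ↥((C i).X n)) ∨
      (∀ (i j : I) (h : i ≤ j) (n : ℤ), Function.Surjective ((T h).f n))) :
    ∀ m : ℤ,
      Function.Injective
        (fun (h : ↥((limComplex C T).homology m)) (i : I) =>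
          HomologicalComplex.homologyMap (limProj C T i) m h) ∧
      Set.range
        (fun (h : ↥((limComplex C T).homology m)) (i : I) =>
          HomologicalComplex.homologyMap (limProj C T i) m h)
        = {g : ∀ i : I, ↥((C i).homology m) |
            ∀ (i j : I) (hij : i ≤ j),
              HomologicalComplex.homologyMap (T hij) m (g j) = g i} :=
  stmt_12_general p E I C T Tcomp hart h2
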